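/- arXiv:2110.08311 — 3 statements merged into one kernel-verified Lean document; each statement's English description precedes it below -/
import Mathlib

section
/- Let X be a locally Nachbin ordered space, ∗ ∈ X, and O an open neighbourhood of ∗. Then the locally ordered space X_O (final topology of q_O, ordered basis of the posets (U_{α,A}, ≤_{α,A})) is a locally Nachbin ordered space if, and only if, the open set O is closed in X. -/
universe u v w v'

/-! ## Ordered bases and locally ordered spaces -/

/-- An *ordered subset* of `X`: a pair of a carrier set and a relation on `X`
(intended to be a partial order on the carrier). -/
structure OSet (X : Type u) : Type u where
  carrier : Set X
  le : X → X → Prop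

namespace OSet

variable {X : Type u} {Y : Type v}

/-- `B` is a partially ordered subset: the relation only relates elements of the
carrier, is reflexive on the carrier, antisymmetric and transitive. -/
def IsPoset (B : OSet X) : Prop :=
  (∀ p q, B.le p q → p ∈ B.carrier ∧ q ∈ B.carrier) ∧
  (∀ p ∈ B.carrier, B.le p p) ∧
  (∀ p q, B.le p q → B.le q p → p = q) ∧
  (∀ p q r, B.le p q → B.le q r → B.le p r)

/-- `B ⊆_lax B'`. -/
def laxSub (B B' : OSet X) : Prop :=
  B.carrier ⊆ B'.carrier ∧ ∀ p q, B.le p q → B'.le p q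

/-- `B ⊆_str B'` : the carrier is included and `≤_B` is the restriction of `≤_{B'}`
to the carrier of `B`. -/
def strSub (B B' : OSet X) : Prop :=
  B.carrier ⊆ B'.carrier ∧ ∀ p ∈ B.carrier, ∀ q ∈ B.carrier, (B.le p q ↔ B'.le p q)

/-- Product of two ordered subsets, with the product order. -/
def prod (B : OSet X) (B' : OSet Y) : OSet (X × Y) where
  carrier := B.carrier ×ˢ B'.carrier
  le p q := B.le p.1 q.1 ∧ B'.le p.2 q.2

/-- The restriction of an ordered subset to a subset `S` (of its carrier). -/
def restrict (B : OSet X) (S : Set X) : OSet X where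
  carrier := S
  le p q := B.le p q ∧ p ∈ S ∧ q ∈ S

/-- `B` is a Nachbin ordered (sub)space: its order is closed in the product of the
subspace `B.carrier` (with the topology inherited from `X`) with itself. -/
def IsNachbin [TopologicalSpace X] (B : OSet X) : Prop :=
  IsClosed {p : B.carrier × B.carrier | B.le p.1 p.2}

end OSet

/-- `𝔅` is an *ordered basis* on the topological space `X`. -/
structure IsOrderedBasis {X : Type u} [TopologicalSpace X] (𝔅 : Set (OSet X)) : Prop where
  isPoset : ∀ B ∈ 𝔅, B.IsPoset
  isBasis : TopologicalSpace.IsTopologicalBasis (OSet.carrier '' 𝔅)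
  compat : ∀ x : X, ∀ B ∈ 𝔅, ∀ B' ∈ 𝔅, x ∈ B.carrier → x ∈ B'.carrier →
    ∃ B'' ∈ 𝔅, x ∈ B''.carrier ∧ B''.carrier ⊆ B.carrier ∩ B'.carrier ∧
      ∀ p q, B''.le p q → B.le p q ∧ B'.le p q

/-- `𝔅` is a *strict* ordered basis: the interpolating element `B''` can be chosen
with `B'' ⊆_str B` and `B'' ⊆_str B'`. -/
def IsStrictOrderedBasis {X : Type u} [TopologicalSpace X] (𝔅 : Set (OSet X)) : Prop :=
  IsOrderedBasis 𝔅 ∧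
    ∀ x : X, ∀ B ∈ 𝔅, ∀ B' ∈ 𝔅, x ∈ B.carrier → x ∈ B'.carrier →
      ∃ B'' ∈ 𝔅, x ∈ B''.carrier ∧ B''.strSub B ∧ B''.strSub B'

/-- `𝔅'` is coarser than `𝔅`. -/
def CoarserThan {X : Type u} (𝔅' 𝔅 : Set (OSet X)) : Prop :=
  ∀ x : X, ∀ B' ∈ 𝔅', x ∈ B'.carrier → ∃ B ∈ 𝔅, x ∈ B.carrier ∧ B.laxSub B'

/-- `𝔅'` is strictly coarser than `𝔅` (`⊆_lax` replaced by `⊆_str`). -/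
def StrictCoarserThan {X : Type u} (𝔅' 𝔅 : Set (OSet X)) : Prop :=
  ∀ x : X, ∀ B' ∈ 𝔅', x ∈ B'.carrier → ∃ B ∈ 𝔅, x ∈ B.carrier ∧ B.strSub B'

/-- Two ordered bases are equivalent when each is coarser than the other. -/
def EquivBases {X : Type u} (𝔅 𝔅' : Set (OSet X)) : Prop :=
  CoarserThan 𝔅' 𝔅 ∧ CoarserThan 𝔅 𝔅'

/-- Strict equivalence of ordered bases. -/
def StrictEquivBases {X : Type u} (𝔅 𝔅' : Set (OSet X)) : Prop :=
  StrictCoarserThan 𝔅' 𝔅 ∧ StrictCoarserThan 𝔅 𝔅'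

/-- The *open posets* `Ō(𝔅)` determined by an ordered basis `𝔅`. -/
def openPosets {X : Type u} (𝔅 : Set (OSet X)) : Set (OSet X) :=
  {A | ∀ x ∈ A.carrier, ∃ B ∈ 𝔅, x ∈ B.carrier ∧ B.laxSub A}

/-- `f` is locally increasing at `x`, w.r.t. the ordered bases `𝔅` (source) and
`𝔅'` (target). -/
def LocIncrAt {X : Type u} {Y : Type v} (𝔅 : Set (OSet X)) (𝔅' : Set (OSet Y))
    (f : X → Y) (x : X) : Prop :=
  ∀ B' ∈ 𝔅', f x ∈ B'.carrier →
    ∃ B ∈ 𝔅, x ∈ B.carrier ∧ (∀ p ∈ B.carrier, f p ∈ B'.carrier) ∧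
      ∀ p q, B.le p q → B'.le (f p) (f q)

/-- `f` is locally increasing. -/
def LocIncr {X : Type u} {Y : Type v} (𝔅 : Set (OSet X)) (𝔅' : Set (OSet Y))
    (f : X → Y) : Prop :=
  ∀ x : X, LocIncrAt 𝔅 𝔅' f x

/-- The locally ordered space given by the basis `𝔅` is locally Nachbin. -/
def IsLocallyNachbin {X : Type u} [TopologicalSpace X] (𝔅 : Set (OSet X)) : Prop :=
  ∀ x : X, ∀ O ∈ openPosets 𝔅, x ∈ O.carrier →
    ∃ O' ∈ openPosets 𝔅, x ∈ O'.carrier ∧ O'.laxSub O ∧ O'.IsNachbin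

/-- The product ordered basis on `X × Y`. -/
def prodBasis {X : Type u} {Y : Type v} (𝔅 : Set (OSet X)) (𝔅' : Set (OSet Y)) :
    Set (OSet (X × Y)) :=
  {C | ∃ B ∈ 𝔅, ∃ B' ∈ 𝔅', C = B.prod B'}

/-- A topological space viewed as a locally ordered space: all its open subsets,
each ordered by equality. -/
def trivBasis (T : Type v) [TopologicalSpace T] : Set (OSet T) :=
  {B | ∃ U : Set T, IsOpen U ∧ B = ⟨U, fun p q => p = q ∧ p ∈ U⟩}

/-! ## The directed circle -/

/-- The proper open arc `{e^{ix} : a < x < b}` of the unit circle, with its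
standard partial order. -/
def arcOSet (a b : ℝ) : OSet Circle where
  carrier := Circle.exp '' Set.Ioo a b
  le p q := ∃ x ∈ Set.Ioo a b, ∃ y ∈ Set.Ioo a b, x ≤ y ∧ Circle.exp x = p ∧ Circle.exp y = q

/-- The strict ordered basis of the directed circle `S⃗¹`: all proper open arcs
with their standard orders. -/
def dCircleBasis : Set (OSet Circle) :=
  {B | ∃ a b : ℝ, 0 < b - a ∧ b - a < 2 * Real.pi ∧ B = arcOSet a b}

/-- `K(f) = {t | ∀ s s', f (s,t) = f (s',t)}`. -/
def Kset {X : Type u} {Y : Type v} (f : Circle × X → Y) : Set X :=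
  {t | ∀ s s' : Circle, f (s, t) = f (s', t)}

/-! ## The space `X_O` -/

/-- The underlying set of `X_O := O ⊔ (S¹ × (X ∖ O))`. -/
def XO (X : Type u) (O : Set X) : Type u := ↥O ⊕ (Circle × ↥(Oᶜ))

open Classical in
/-- The map `q_O : S¹ × X → X_O`. -/
noncomputable def qO {X : Type u} (O : Set X) : Circle × X → XO X O := fun p =>
  if h : p.2 ∈ O then Sum.inl ⟨p.2, h⟩ else Sum.inr (p.1, ⟨p.2, h⟩)

/-- `X_O` carries the final topology of `q_O`. -/
noncomputable instance XO.topology {X : Type u} [TopologicalSpace X] (O : Set X) :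
    TopologicalSpace (XO X O) :=
  TopologicalSpace.coinduced (qO O) inferInstance

/-- The subset `U_{α,A}` of `X_O` (for `αc` a set of points of the circle and
`A` a subset of `X`). -/
def USet {X : Type u} (O : Set X) (αc : Set Circle) (A : Set X) : Set (XO X O) :=
  Sum.inl '' {t : ↥O | (t : X) ∈ A} ∪
    Sum.inr '' {p : Circle × ↥(Oᶜ) | p.1 ∈ αc ∧ (p.2 : X) ∈ A}

/-- The second component of an element of `X_O`. -/
def XO.p2 {X : Type u} {O : Set X} : XO X O → X :=
  Sum.elim (fun t => (t : X)) (fun p => (p.2 : X))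

/-- The relation `≤¹_{α,A}` on `X_O`: the image under `q_O` of the product order
on `α × A`. -/
def leOne {X : Type u} (O : Set X) (α : OSet Circle) (A : OSet X) (u u' : XO X O) : Prop :=
  ∃ x x' : Circle × X, α.le x.1 x'.1 ∧ A.le x.2 x'.2 ∧ qO O x = u ∧ qO O x' = u'

/-- The relation `⊑` on `X_O`. -/
def sqsub {X : Type u} (O : Set X) (α : OSet Circle) (A : OSet X) (u u' : XO X O) : Prop :=
  A.le (XO.p2 u) (XO.p2 u') ∧
    ((∃ t : ↥O, u = Sum.inl t) ∨ (∃ t : ↥O, u' = Sum.inl t) ∨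
      ∃ (s s' : Circle) (t t' : ↥(Oᶜ)),
        u = Sum.inr (s, t) ∧ u' = Sum.inr (s', t') ∧ α.le s s')

/-- The poset `(U_{α,A}, ≤_{α,A})`, where `≤_{α,A}` is the transitive closure of
`≤¹_{α,A}`. -/
def UOSet {X : Type u} (O : Set X) (α : OSet Circle) (A : OSet X) : OSet (XO X O) where
  carrier := USet O α.carrier A.carrier
  le := Relation.TransGen (leOne O α A)

/-- The ordered basis of `X_O`: the posets `(U_{α,A}, ≤_{α,A})` for `α` a proper
open arc and `A` an open poset of `X`. -/
def XOBasis {X : Type u} (𝔅 : Set (OSet X)) (O : Set X) : Set (OSet (XO X O)) :=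
  {C | ∃ a b : ℝ, 0 < b - a ∧ b - a < 2 * Real.pi ∧
    ∃ A ∈ openPosets 𝔅, C = UOSet O (arcOSet a b) A}


/-!
If `O` is not closed, pick `t₀ ∈ closure O \ O` and a point `(s, t₀)` of `X_O`. Near `t₀` there
are points `t ∈ O`, at which `q_O (σ, t) = t` for every `σ`; hence in any open poset around
`(s, t₀)` whose order is closed, any two points `(σ₁, t₀)`, `(σ₂, t₀)` are related, being limits of
the pairs `(t, t)`. But inside `U_{α,A}` the fibre over `t₀ ∉ O` is ordered by the arc `α`, which is
antisymmetric, and `S¹` has no isolated points.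

If `O` is clopen, `X_O` is the topological sum `O ⊔ (S¹ × Oᶜ)`. Around a point, shrink `A` to a
Nachbin open poset `A'` lying entirely in `O` or in `Oᶜ`; then `U_{α,A'}` ordered as the coproduct
of `A'|_O` and `α × A'|_{Oᶜ}` is an open poset whose order is cut out by the continuous maps `p₂`
and (on `Oᶜ`) the circle coordinate, hence closed.
-/

open Set Filter Topology Real

namespace OSet

variable {Y : Type v} {B B' B'' : OSet Y}

theorem laxSub.trans (h : B.laxSub B') (h' : B'.laxSub B'') : B.laxSub B'' :=
  ⟨h.1.trans h'.1, fun p q hpq => h'.2 p q (h.2 p q hpq)⟩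

theorem restrict_laxSub {S : Set Y} (hS : S ⊆ B.carrier) : (B.restrict S).laxSub B :=
  ⟨hS, fun _ _ h => h.1⟩

variable [TopologicalSpace Y]

theorem IsNachbin.isClosed_preimage (hB : B.IsNachbin) {Z : Type w} [TopologicalSpace Z]
    {f : Z → B.carrier} (hf : Continuous f) : IsClosed {p : Z × Z | B.le (f p.1) (f p.2)} :=
  hB.preimage (hf.prodMap hf)

theorem IsNachbin.restrict (hB : B.IsNachbin) {S : Set Y} (hS : S ⊆ B.carrier) :
    (B.restrict S).IsNachbin := by
  have : {p : S × S | (B.restrict S).le p.1 p.2} =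
      {p : S × S | B.le (inclusion hS p.1) (inclusion hS p.2)} := by
    ext ⟨u, v⟩
    exact ⟨And.left, fun h => ⟨h, u.2, v.2⟩⟩
  exact (this ▸ hB.isClosed_preimage (continuous_inclusion hS) :)

theorem IsNachbin.le_of_mem_closure (hB : B.IsNachbin) {u v : Y} (hu : u ∈ B.carrier)
    (hv : v ∈ B.carrier)
    (h : (u, v) ∈ closure {p : Y × Y | p.1 ∈ B.carrier ∧ p.2 ∈ B.carrier ∧ B.le p.1 p.2}) :
    B.le u v := by
  have hind : IsInducing (Prod.map ((↑) : B.carrier → Y) ((↑) : B.carrier → Y)) :=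
    IsInducing.subtypeVal.prodMap IsInducing.subtypeVal
  have : ((⟨u, hu⟩, ⟨v, hv⟩) : B.carrier × B.carrier) ∈ closure {p | B.le p.1 p.2} := by
    rw [hind.closure_eq_preimage_closure_image]
    refine closure_mono ?_ h
    rintro ⟨p, q⟩ ⟨hp, hq, hpq⟩
    exact ⟨(⟨p, hp⟩, ⟨q, hq⟩), hpq, rfl⟩
  rwa [hB.closure_eq] at this

end OSet

section OpenPosets

variable {X : Type u} {𝔅 : Set (OSet X)}

theorem mem_openPosets_of_mem {B : OSet X} (hB : B ∈ 𝔅) : B ∈ openPosets 𝔅 :=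
  fun _ hx => ⟨B, hB, hx, subset_rfl, fun _ _ h => h⟩

theorem le_refl_of_mem_openPosets (h𝔅 : ∀ B ∈ 𝔅, ∀ x ∈ B.carrier, B.le x x) {A : OSet X}
    (hA : A ∈ openPosets 𝔅) {x : X} (hx : x ∈ A.carrier) : A.le x x := by
  obtain ⟨B, hB, hxB, hBA⟩ := hA x hx
  exact hBA.2 x x (h𝔅 B hB x hxB)

variable [TopologicalSpace X]

theorem isOpen_carrier_of_mem_openPosets (h𝔅 : ∀ B ∈ 𝔅, IsOpen B.carrier) {A : OSet X}
    (hA : A ∈ openPosets 𝔅) : IsOpen A.carrier :=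
  isOpen_iff_forall_mem_open.2 fun x hx =>
    let ⟨B, hB, hxB, hBA⟩ := hA x hx
    ⟨B.carrier, hBA.1, h𝔅 B hB, hxB⟩

theorem IsOrderedBasis.isOpen_carrier (h𝔅 : IsOrderedBasis 𝔅) {B : OSet X} (hB : B ∈ 𝔅) :
    IsOpen B.carrier :=
  h𝔅.isBasis.isOpen ⟨B, hB, rfl⟩

theorem IsOrderedBasis.exists_laxSub_subset (h𝔅 : IsOrderedBasis 𝔅) {B : OSet X} (hB : B ∈ 𝔅)
    {x : X} (hx : x ∈ B.carrier) {V : Set X} (hV : IsOpen V) (hxV : x ∈ V) :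
    ∃ B' ∈ 𝔅, x ∈ B'.carrier ∧ B'.carrier ⊆ V ∧ B'.laxSub B := by
  obtain ⟨_, ⟨B₁, hB₁, rfl⟩, hxB₁, hB₁V⟩ := h𝔅.isBasis.exists_subset_of_mem_open
    (show x ∈ B.carrier ∩ V from ⟨hx, hxV⟩) ((h𝔅.isOpen_carrier hB).inter hV)
  obtain ⟨B', hB', hxB', hB'sub, hB'le⟩ := h𝔅.compat x B hB B₁ hB₁ hx hxB₁
  exact ⟨B', hB', hxB', fun y hy => (hB₁V (hB'sub hy).2).2, fun y hy => (hB'sub hy).1,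
    fun p q h => (hB'le p q h).1⟩

theorem restrict_inter_mem_openPosets (h𝔅 : IsOrderedBasis 𝔅) {A : OSet X}
    (hA : A ∈ openPosets 𝔅) {V : Set X} (hV : IsOpen V) :
    A.restrict (A.carrier ∩ V) ∈ openPosets 𝔅 := by
  rintro x ⟨hxA, hxV⟩
  obtain ⟨B, hB, hxB, hBA⟩ := hA x hxA
  obtain ⟨B', hB', hxB', hB'V, hB'B⟩ := h𝔅.exists_laxSub_subset hB hxB hV hxV
  have hB'A := hB'B.trans hBA
  have hmem : ∀ y ∈ B'.carrier, y ∈ A.carrier ∩ V := fun y hy => ⟨hB'A.1 hy, hB'V hy⟩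
  refine ⟨B', hB', hxB', hmem, fun p q hpq => ?_⟩
  obtain ⟨hp, hq⟩ := (h𝔅.isPoset B' hB').1 p q hpq
  exact ⟨hB'A.2 p q hpq, hmem p hp, hmem q hq⟩

theorem IsLocallyNachbin.exists_isNachbin_subset (hN : IsLocallyNachbin 𝔅)
    (h𝔅 : IsOrderedBasis 𝔅) {A : OSet X} (hA : A ∈ openPosets 𝔅) {x : X} (hx : x ∈ A.carrier)
    {V : Set X} (hV : IsOpen V) (hxV : x ∈ V) :
    ∃ A' ∈ openPosets 𝔅, x ∈ A'.carrier ∧ A'.carrier ⊆ V ∧ A'.laxSub A ∧ A'.IsNachbin := by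
  obtain ⟨A'', hA'', hxA'', hA''A, hA''N⟩ := hN x A hA hx
  exact ⟨A''.restrict (A''.carrier ∩ V), restrict_inter_mem_openPosets h𝔅 hA'' hV,
    ⟨hxA'', hxV⟩, inter_subset_right, (OSet.restrict_laxSub inter_subset_left).trans hA''A,
    hA''N.restrict inter_subset_left⟩

end OpenPosets

section Arc

instance : Nontrivial Circle :=
  ⟨⟨Circle.exp π, 1, fun h => by
    have := congrArg ((↑) : Circle → ℂ) h
    rw [Circle.coe_exp, Complex.exp_pi_mul_I, Circle.coe_one] at this
    norm_num at this⟩⟩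

variable {a b : ℝ}

theorem injOn_circleExp_Ioo (h2 : b - a < 2 * π) : InjOn Circle.exp (Ioo a b) :=
  (Circle.exp_injOn_Icc h2).mono Ioo_subset_Icc_self

theorem arcOSet_le_exp_iff (h2 : b - a < 2 * π) {θ θ' : ℝ} (hθ : θ ∈ Ioo a b)
    (hθ' : θ' ∈ Ioo a b) : (arcOSet a b).le (Circle.exp θ) (Circle.exp θ') ↔ θ ≤ θ' := by
  constructor
  · rintro ⟨x, hx, y, hy, hxy, hxθ, hyθ'⟩
    rwa [← injOn_circleExp_Ioo h2 hx hθ hxθ, ← injOn_circleExp_Ioo h2 hy hθ' hyθ']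
  · exact fun h => ⟨θ, hθ, θ', hθ', h, rfl, rfl⟩

theorem arcOSet_le_refl {s : Circle} (hs : s ∈ (arcOSet a b).carrier) : (arcOSet a b).le s s := by
  obtain ⟨θ, hθ, rfl⟩ := hs
  exact ⟨θ, hθ, θ, hθ, le_rfl, rfl, rfl⟩

theorem arcOSet_le_trans (h2 : b - a < 2 * π) {s s' s'' : Circle} (h : (arcOSet a b).le s s')
    (h' : (arcOSet a b).le s' s'') : (arcOSet a b).le s s'' := by
  obtain ⟨x, hx, y, hy, hxy, rfl, rfl⟩ := h
  obtain ⟨y', hy', z, hz, hyz, hyy', rfl⟩ := h'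
  rw [← injOn_circleExp_Ioo h2 hy hy' hyy'.symm] at hyz
  exact (arcOSet_le_exp_iff h2 hx hz).2 (hxy.trans hyz)

theorem arcOSet_le_antisymm (h2 : b - a < 2 * π) {s s' : Circle} (h : (arcOSet a b).le s s')
    (h' : (arcOSet a b).le s' s) : s = s' := by
  obtain ⟨x, hx, y, hy, hxy, rfl, rfl⟩ := h
  rw [arcOSet_le_exp_iff h2 hy hx] at h'
  rw [le_antisymm hxy h']

theorem arcOSet_carrier_nonempty (h1 : 0 < b - a) : (arcOSet a b).carrier.Nonempty :=
  ⟨_, (a + b) / 2, ⟨by linarith, by linarith⟩, rfl⟩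

theorem isOpen_arcOSet_carrier : IsOpen (arcOSet a b).carrier :=
  isLocalHomeomorph_circleExp.isOpenMap _ isOpen_Ioo

theorem arcOSet_isNachbin (h2 : b - a < 2 * π) : (arcOSet a b).IsNachbin := by
  let f : Ioo a b → (arcOSet a b).carrier := fun θ => ⟨Circle.exp θ, θ, θ.2, rfl⟩
  have hf_inj : Function.Injective f := fun θ θ' h =>
    Subtype.ext (injOn_circleExp_Ioo h2 θ.2 θ'.2 (congrArg Subtype.val h))
  have hf_surj : Function.Surjective f := by
    rintro ⟨_, θ, hθ, rfl⟩
    exact ⟨⟨θ, hθ⟩, rfl⟩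
  have hf_cont : Continuous f := (Circle.exp.continuous.comp continuous_subtype_val).subtype_mk _
  have hf_open : IsOpenMap f :=
    (isLocalHomeomorph_circleExp.isOpenMap.comp isOpen_Ioo.isOpenMap_subtype_val).codRestrict _
  let e := (Equiv.ofBijective f ⟨hf_inj, hf_surj⟩).toHomeomorphOfContinuousOpen hf_cont hf_open
  unfold OSet.IsNachbin
  convert (isClosed_le continuous_fst continuous_snd).preimage
    (e.symm.continuous.prodMap e.symm.continuous) using 1
  ext ⟨u, v⟩
  obtain ⟨θ, rfl⟩ := e.surjective u
  obtain ⟨θ', rfl⟩ := e.surjective v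
  simp only [mem_ofPred_eq, mem_preimage, Prod.map_apply, Homeomorph.symm_apply_apply]
  exact arcOSet_le_exp_iff h2 θ.2 θ'.2

end Arc

section XO

variable {X : Type u} {O : Set X} {αc : Set Circle} {S S' : Set X} {α : OSet Circle} {A : OSet X}
  {u v : XO X O}

theorem qO_of_mem {s : Circle} {t : X} (h : t ∈ O) :
    qO O (s, t) = (Sum.inl ⟨t, h⟩ : XO X O) :=
  dif_pos h

theorem qO_of_notMem {s : Circle} {t : X} (h : t ∉ O) :
    qO O (s, t) = (Sum.inr (s, ⟨t, h⟩) : XO X O) :=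
  dif_neg h

theorem p2_qO (p : Circle × X) : XO.p2 (qO O p) = p.2 := by
  obtain ⟨s, t⟩ := p
  by_cases h : t ∈ O
  · rw [qO_of_mem h]; rfl
  · rw [qO_of_notMem h]; rfl

theorem qO_eq_inr {s : Circle} {t : X} {p : Circle × ↥Oᶜ}
    (h : qO O (s, t) = (Sum.inr p : XO X O)) : s = p.1 ∧ t = p.2 := by
  by_cases ht : t ∈ O
  · rw [qO_of_mem ht] at h; cases h
  · rw [qO_of_notMem ht] at h; cases h; exact ⟨rfl, rfl⟩

theorem XO.exists_inl_of_p2_mem (h : XO.p2 u ∈ O) : ∃ t : ↥O, u = (Sum.inl t : XO X O) := by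
  rcases u with t | p
  · exact ⟨t, rfl⟩
  · exact absurd h p.2.2

theorem XO.exists_inr_of_p2_notMem (h : XO.p2 u ∉ O) :
    ∃ p : Circle × ↥Oᶜ, u = (Sum.inr p : XO X O) := by
  rcases u with t | p
  · exact absurd t.2 h
  · exact ⟨p, rfl⟩

theorem mem_USet_inl {t : ↥O} : (Sum.inl t : XO X O) ∈ USet O αc S ↔ (t : X) ∈ S := by
  refine ⟨?_, fun h => Or.inl ⟨t, h, rfl⟩⟩
  rintro (⟨t', ht', h⟩ | ⟨p, -, h⟩)
  · rwa [← Sum.inl_injective h]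
  · cases h

theorem mem_USet_inr {p : Circle × ↥Oᶜ} :
    (Sum.inr p : XO X O) ∈ USet O αc S ↔ p.1 ∈ αc ∧ (p.2 : X) ∈ S := by
  refine ⟨?_, fun h => Or.inr ⟨p, h, rfl⟩⟩
  rintro (⟨t, -, h⟩ | ⟨p', hp', h⟩)
  · cases h
  · rwa [← Sum.inr_injective h]

theorem p2_mem_of_mem_USet (hu : u ∈ USet O αc S) : XO.p2 u ∈ S := by
  rcases hu with ⟨t, ht, rfl⟩ | ⟨p, hp, rfl⟩
  exacts [ht, hp.2]

theorem mem_USet_of_p2_mem (hu : u ∈ USet O αc S) (h : XO.p2 u ∈ S') : u ∈ USet O αc S' := by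
  rcases hu with ⟨t, -, rfl⟩ | ⟨p, hp, rfl⟩
  exacts [Or.inl ⟨t, h, rfl⟩, Or.inr ⟨p, ⟨hp.1, h⟩, rfl⟩]

theorem USet_mono (h : S ⊆ S') : USet O αc S ⊆ USet O αc S' :=
  fun _ hu => mem_USet_of_p2_mem hu (h (p2_mem_of_mem_USet hu))

theorem exists_qO_eq_of_mem_USet (hαc : αc.Nonempty) (hu : u ∈ USet O αc S) :
    ∃ σ ∈ αc, qO O (σ, XO.p2 u) = u := by
  rcases hu with ⟨t, -, rfl⟩ | ⟨⟨s, t⟩, ⟨hs, -⟩, rfl⟩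
  · obtain ⟨σ, hσ⟩ := hαc
    exact ⟨σ, hσ, qO_of_mem t.2⟩
  · exact ⟨s, hs, qO_of_notMem t.2⟩

theorem p2_le_of_leOne (h : leOne O α A u v) : A.le (XO.p2 u) (XO.p2 v) := by
  obtain ⟨x, x', -, hA, rfl, rfl⟩ := h
  rwa [p2_qO, p2_qO]

theorem leOne_inr_inr {s s' : Circle} {t t' : ↥Oᶜ}
    (h : leOne O α A (Sum.inr (s, t) : XO X O) (Sum.inr (s', t'))) : α.le s s' ∧ A.le t t' := by
  obtain ⟨⟨σ, τ⟩, ⟨σ', τ'⟩, hσ, hτ, h, h'⟩ := h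
  obtain ⟨rfl, rfl⟩ := qO_eq_inr h
  obtain ⟨rfl, rfl⟩ := qO_eq_inr h'
  exact ⟨hσ, hτ⟩

theorem p2_le_and_le_of_transGen_leOne (hα : ∀ p q r, α.le p q → α.le q r → α.le p r)
    {B : OSet X} (hB : B.IsPoset) (h : Relation.TransGen (leOne O α B) u v) :
    B.le (XO.p2 u) (XO.p2 v) ∧ ∀ (t : ↥Oᶜ) (s s' : Circle),
      u = Sum.inr (s, t) → v = Sum.inr (s', t) → α.le s s' := by
  induction h with
  | single h =>
    refine ⟨p2_le_of_leOne h, ?_⟩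
    rintro t s s' rfl rfl
    exact (leOne_inr_inr h).1
  | @tail w v _ hwv ih =>
    refine ⟨hB.2.2.2 _ _ _ ih.1 (p2_le_of_leOne hwv), ?_⟩
    rintro t s s' rfl rfl
    have hw : XO.p2 w = t := hB.2.2.1 _ _ (p2_le_of_leOne hwv) ih.1
    obtain ⟨⟨σ, t'⟩, rfl⟩ := XO.exists_inr_of_p2_notMem (hw ▸ t.2)
    obtain rfl : t' = t := Subtype.ext hw
    exact hα _ _ _ (ih.2 _ s σ rfl rfl) (leOne_inr_inr hwv).1

theorem UOSet_le_refl (hα : ∀ s ∈ α.carrier, α.le s s) (hαc : α.carrier.Nonempty)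
    (hA : ∀ t ∈ A.carrier, A.le t t) (hu : u ∈ (UOSet O α A).carrier) : (UOSet O α A).le u u := by
  obtain ⟨σ, hσ, hσu⟩ := exists_qO_eq_of_mem_USet hαc hu
  exact .single ⟨_, _, hα σ hσ, hA _ (p2_mem_of_mem_USet hu), hσu, hσu⟩

variable [TopologicalSpace X]

theorem continuous_qO : Continuous (qO O) :=
  continuous_coinduced_rng

theorem XO.continuous_p2 : Continuous (XO.p2 : XO X O → X) :=
  continuous_coinduced_dom.2 (continuous_snd.congr fun p => (p2_qO p).symm)

theorem isOpen_USet (hO : IsOpen O) (hαc : IsOpen αc) (hS : IsOpen S) :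
    IsOpen (USet O αc S) := by
  have : qO O ⁻¹' USet O αc S = (univ ×ˢ (O ∩ S)) ∪ (αc ×ˢ S) := by
    ext ⟨s, t⟩
    by_cases ht : t ∈ O
    · rw [mem_preimage, qO_of_mem ht]
      exact mem_USet_inl.trans (by simp [ht])
    · rw [mem_preimage, qO_of_notMem ht]
      exact mem_USet_inr.trans (by simp [ht, and_comm])
  exact isOpen_coinduced.2 (this ▸ (isOpen_univ.prod (hO.inter hS)).union (hαc.prod hS))

end XO

section NotClosed

variable {X : Type u} [TopologicalSpace X] {𝔅 : Set (OSet X)} {O : Set X}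

theorem isOpen_carrier_of_mem_XOBasis (h𝔅 : IsOrderedBasis 𝔅) (hO : IsOpen O)
    {C : OSet (XO X O)} (hC : C ∈ XOBasis 𝔅 O) : IsOpen C.carrier := by
  obtain ⟨a, b, -, -, A, hA, rfl⟩ := hC
  exact isOpen_USet hO isOpen_arcOSet_carrier
    (isOpen_carrier_of_mem_openPosets (fun _ => h𝔅.isOpen_carrier) hA)

theorem le_refl_of_mem_XOBasis (h𝔅 : IsOrderedBasis 𝔅) {C : OSet (XO X O)}
    (hC : C ∈ XOBasis 𝔅 O) {u : XO X O} (hu : u ∈ C.carrier) : C.le u u := by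
  obtain ⟨a, b, h1, -, A, hA, rfl⟩ := hC
  exact UOSet_le_refl (fun _ => arcOSet_le_refl) (arcOSet_carrier_nonempty h1)
    (fun _ => le_refl_of_mem_openPosets (fun B hB => (h𝔅.isPoset B hB).2.1) hA) hu

theorem le_qO_of_mem_closure (h𝔅 : IsOrderedBasis 𝔅) (hO : IsOpen O) {O' : OSet (XO X O)}
    (hO' : O' ∈ openPosets (XOBasis 𝔅 O)) (hO'N : O'.IsNachbin) {t₀ : X}
    (ht₀ : t₀ ∈ closure O) {σ₁ σ₂ : Circle} (h₁ : qO O (σ₁, t₀) ∈ O'.carrier)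
    (h₂ : qO O (σ₂, t₀) ∈ O'.carrier) : O'.le (qO O (σ₁, t₀)) (qO O (σ₂, t₀)) := by
  have hopen : IsOpen O'.carrier :=
    isOpen_carrier_of_mem_openPosets (fun _ => isOpen_carrier_of_mem_XOBasis h𝔅 hO) hO'
  have hq (σ : Circle) : Continuous fun t : X => qO O (σ, t) :=
    continuous_qO.comp (Continuous.prodMk_right σ)
  have := mem_closure_iff_nhdsWithin_neBot.1 ht₀
  refine hO'N.le_of_mem_closure h₁ h₂ (mem_closure_of_tendsto (b := 𝓝[O] t₀)
    ((((hq σ₁).prodMk (hq σ₂)).tendsto t₀).mono_left nhdsWithin_le_nhds) ?_)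
  filter_upwards [self_mem_nhdsWithin,
    nhdsWithin_le_nhds ((hq σ₁).continuousAt.preimage_mem_nhds (hopen.mem_nhds h₁))]
    with t htO ht
  have h : qO O (σ₂, t) = qO O (σ₁, t) := by rw [qO_of_mem htO, qO_of_mem htO]
  rw [h]
  exact ⟨ht, ht, le_refl_of_mem_openPosets (fun _ => le_refl_of_mem_XOBasis h𝔅) hO' ht⟩

theorem isClosed_of_isLocallyNachbin_XOBasis (h𝔅 : IsOrderedBasis 𝔅) (hO : IsOpen O)
    (hLN : IsLocallyNachbin (XOBasis 𝔅 O)) : IsClosed O := by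
  refine isClosed_of_closure_subset fun t₀ ht₀ => by_contra fun ht₀O => ?_
  obtain ⟨_, ⟨B, hB, rfl⟩, ht₀B, -⟩ :=
    h𝔅.isBasis.exists_subset_of_mem_open (mem_univ t₀) isOpen_univ
  have h1 : (0 : ℝ) < π - 0 := by linarith [pi_pos]
  have h2 : π - 0 < 2 * π := by linarith [pi_pos]
  obtain ⟨s, hs⟩ := arcOSet_carrier_nonempty h1
  have hU : UOSet O (arcOSet 0 π) B ∈ openPosets (XOBasis 𝔅 O) :=
    mem_openPosets_of_mem ⟨0, π, h1, h2, B, mem_openPosets_of_mem hB, rfl⟩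
  have hsU : qO O (s, t₀) ∈ (UOSet O (arcOSet 0 π) B).carrier := by
    rw [qO_of_notMem ht₀O]
    exact mem_USet_inr.2 ⟨hs, ht₀B⟩
  obtain ⟨O', hO', hsO', hO'U, hO'N⟩ := hLN _ _ hU hsU
  have hfibre : IsOpen {σ | qO O (σ, t₀) ∈ O'.carrier} :=
    (isOpen_carrier_of_mem_openPosets (fun _ => isOpen_carrier_of_mem_XOBasis h𝔅 hO) hO').preimage
      (continuous_qO.comp (Continuous.prodMk_left t₀))
  obtain ⟨s', hs'O', hs's⟩ := ((eventually_nhdsWithin_of_eventually_nhds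
    (hfibre.mem_nhds hsO')).and self_mem_nhdsWithin).exists (f := 𝓝[≠] s)
  have hle {σ σ' : Circle} (h : qO O (σ, t₀) ∈ O'.carrier) (h' : qO O (σ', t₀) ∈ O'.carrier) :
      (arcOSet 0 π).le σ σ' := by
    have := hO'U.2 _ _ (le_qO_of_mem_closure h𝔅 hO hO' hO'N ht₀ h h')
    rw [qO_of_notMem ht₀O, qO_of_notMem ht₀O] at this
    exact (p2_le_and_le_of_transGen_leOne (fun _ _ _ => arcOSet_le_trans h2)
      (h𝔅.isPoset B hB) this).2 _ _ _ rfl rfl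
  exact hs's (arcOSet_le_antisymm h2 (hle hs'O' hsO') (hle hsO' hs'O'))

end NotClosed

section Clopen

variable {X : Type u} {O : Set X}

def sumLe (O : Set X) (α : OSet Circle) (A : OSet X) : XO X O → XO X O → Prop :=
  Sum.LiftRel (fun t t' => A.le t t') (fun p p' => α.le p.1 p'.1 ∧ A.le p.2 p'.2)

def sumOSet (O : Set X) (α : OSet Circle) (A : OSet X) : OSet (XO X O) where
  carrier := USet O α.carrier A.carrier
  le := sumLe O α A

/-- The circle coordinate, with the junk value `1` on `O`. -/
noncomputable def XO.p1 : XO X O → Circle :=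
  Sum.elim (fun _ => 1) Prod.fst

variable {α : OSet Circle} {A A' : OSet X} {u v : XO X O}

theorem sumLe_mono (h : ∀ p q, A.le p q → A'.le p q) (huv : sumLe O α A u v) :
    sumLe O α A' u v :=
  huv.mono (fun _ _ => h _ _) (fun _ _ hp => ⟨hp.1, h _ _ hp.2⟩)

theorem sumLe_trans (hα : ∀ p q r, α.le p q → α.le q r → α.le p r)
    (hA : ∀ p q r, A.le p q → A.le q r → A.le p r) {w : XO X O} :
    sumLe O α A u v → sumLe O α A v w → sumLe O α A u w := by
  have : IsTrans ↥O fun t t' => A.le t t' := ⟨fun _ _ _ => hA _ _ _⟩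
  have : IsTrans (Circle × ↥Oᶜ) fun p p' => α.le p.1 p'.1 ∧ A.le p.2 p'.2 :=
    ⟨fun _ _ _ h h' => ⟨hα _ _ _ h.1 h'.1, hA _ _ _ h.2 h'.2⟩⟩
  exact Sum.LiftRel.trans _ _

theorem sumLe_of_leOne (hside : A.carrier ⊆ O ∨ A.carrier ⊆ Oᶜ)
    (hA : ∀ p q, A.le p q → p ∈ A.carrier ∧ q ∈ A.carrier) (h : leOne O α A u v) :
    sumLe O α A u v := by
  obtain ⟨⟨s, t⟩, ⟨s', t'⟩, hs, ht, rfl, rfl⟩ := h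
  obtain ⟨htA, ht'A⟩ := hA _ _ ht
  rcases hside with hAO | hAO
  · rw [qO_of_mem (hAO htA), qO_of_mem (hAO ht'A)]
    exact .inl ht
  · rw [qO_of_notMem (hAO htA), qO_of_notMem (hAO ht'A)]
    exact .inr ⟨hs, ht⟩

theorem sumLe_of_transGen_leOne (hα : ∀ p q r, α.le p q → α.le q r → α.le p r)
    (hA : A.IsPoset) (hside : A.carrier ⊆ O ∨ A.carrier ⊆ Oᶜ)
    (h : Relation.TransGen (leOne O α A) u v) : sumLe O α A u v := by
  induction h with
  | single h => exact sumLe_of_leOne hside hA.1 h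
  | tail _ h ih => exact sumLe_trans hα hA.2.2.2 ih (sumLe_of_leOne hside hA.1 h)

theorem leOne_of_sumLe (hα : ∀ s ∈ α.carrier, α.le s s) (hαc : α.carrier.Nonempty)
    (h : ∀ p q, A'.le p q → A.le p q) (huv : sumLe O α A' u v) : leOne O α A u v := by
  obtain ⟨σ, hσ⟩ := hαc
  rcases huv with ⟨h'⟩ | ⟨h'⟩
  · exact ⟨(σ, _), (σ, _), hα σ hσ, h _ _ h', qO_of_mem _, qO_of_mem _⟩
  · exact ⟨(_, _), (_, _), h'.1, h _ _ h'.2, qO_of_notMem _, qO_of_notMem _⟩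

theorem sumLe_iff_of_p2_mem (hu : XO.p2 u ∈ O) (hv : XO.p2 v ∈ O) :
    sumLe O α A u v ↔ A.le (XO.p2 u) (XO.p2 v) := by
  obtain ⟨t, rfl⟩ := XO.exists_inl_of_p2_mem hu
  obtain ⟨t', rfl⟩ := XO.exists_inl_of_p2_mem hv
  exact Sum.liftRel_inl_inl

theorem sumLe_iff_of_p2_notMem (hu : XO.p2 u ∉ O) (hv : XO.p2 v ∉ O) :
    sumLe O α A u v ↔ α.le (XO.p1 u) (XO.p1 v) ∧ A.le (XO.p2 u) (XO.p2 v) := by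
  obtain ⟨p, rfl⟩ := XO.exists_inr_of_p2_notMem hu
  obtain ⟨p', rfl⟩ := XO.exists_inr_of_p2_notMem hv
  exact Sum.liftRel_inr_inr

theorem p1_mem_of_mem_USet {αc : Set Circle} {S : Set X} (hu : u ∈ USet O αc S)
    (h : XO.p2 u ∉ O) : XO.p1 u ∈ αc := by
  obtain ⟨p, rfl⟩ := XO.exists_inr_of_p2_notMem h
  exact (mem_USet_inr.1 hu).1

theorem sumOSet_laxSub_UOSet {a b : ℝ} (h1 : 0 < b - a) (h : A'.laxSub A) :
    (sumOSet O (arcOSet a b) A').laxSub (UOSet O (arcOSet a b) A) :=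
  ⟨USet_mono h.1, fun _ _ huv => .single
    (leOne_of_sumLe (fun _ => arcOSet_le_refl) (arcOSet_carrier_nonempty h1) h.2 huv)⟩

variable [TopologicalSpace X]

theorem XO.continuous_p1 (hO : IsClopen O) : Continuous (XO.p1 : XO X O → Circle) := by
  classical
  have hcomp : XO.p1 ∘ qO O = fun p => if p.2 ∈ O then 1 else p.1 := by
    funext ⟨s, t⟩
    by_cases ht : t ∈ O
    · simp only [Function.comp_apply, qO_of_mem ht, if_pos ht]; rfl
    · simp only [Function.comp_apply, qO_of_notMem ht, if_neg ht]; rfl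
  refine continuous_coinduced_dom.2 (hcomp ▸ Continuous.if (fun p hp => ?_) continuous_const
    continuous_fst)
  have hfr : frontier {p : Circle × X | p.2 ∈ O} = ∅ := (hO.preimage continuous_snd).frontier_eq
  exact absurd hp (hfr ▸ notMem_empty p)

theorem isNachbin_sumOSet_of_subset (α : OSet Circle) (hAO : A.carrier ⊆ O) (hA : A.IsNachbin) :
    (sumOSet O α A).IsNachbin := by
  let f : (sumOSet O α A).carrier → A.carrier := fun u => ⟨XO.p2 u.1, p2_mem_of_mem_USet u.2⟩
  have hf : Continuous f := (XO.continuous_p2.comp continuous_subtype_val).subtype_mk _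
  unfold OSet.IsNachbin
  convert hA.isClosed_preimage hf using 1
  ext ⟨u, v⟩
  exact sumLe_iff_of_p2_mem (hAO (f u).2) (hAO (f v).2)

theorem isNachbin_sumOSet_of_subset_compl (hO : IsClopen O) (hα : α.IsNachbin)
    (hAO : A.carrier ⊆ Oᶜ) (hA : A.IsNachbin) : (sumOSet O α A).IsNachbin := by
  let f : (sumOSet O α A).carrier → A.carrier := fun u => ⟨XO.p2 u.1, p2_mem_of_mem_USet u.2⟩
  let g : (sumOSet O α A).carrier → α.carrier :=
    fun u => ⟨XO.p1 u.1, p1_mem_of_mem_USet u.2 (hAO (p2_mem_of_mem_USet u.2))⟩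
  have hf : Continuous f := (XO.continuous_p2.comp continuous_subtype_val).subtype_mk _
  have hg : Continuous g := ((XO.continuous_p1 hO).comp continuous_subtype_val).subtype_mk _
  unfold OSet.IsNachbin
  convert (hα.isClosed_preimage hg).inter (hA.isClosed_preimage hf) using 1
  ext ⟨u, v⟩
  exact sumLe_iff_of_p2_notMem (hAO (f u).2) (hAO (f v).2)

variable {𝔅 : Set (OSet X)}

theorem mem_openPosets_sumOSet (h𝔅 : IsOrderedBasis 𝔅) (hA : A ∈ openPosets 𝔅)
    (hside : A.carrier ⊆ O ∨ A.carrier ⊆ Oᶜ) {a b : ℝ} (h1 : 0 < b - a) (h2 : b - a < 2 * π) :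
    sumOSet O (arcOSet a b) A ∈ openPosets (XOBasis 𝔅 O) := by
  intro u hu
  obtain ⟨B, hB, huB, hBA⟩ := hA _ (p2_mem_of_mem_USet hu)
  have hBside : B.carrier ⊆ O ∨ B.carrier ⊆ Oᶜ := hside.imp hBA.1.trans hBA.1.trans
  exact ⟨UOSet O (arcOSet a b) B, ⟨a, b, h1, h2, B, mem_openPosets_of_mem hB, rfl⟩,
    mem_USet_of_p2_mem hu huB, USet_mono hBA.1, fun p q hpq => sumLe_mono hBA.2
      (sumLe_of_transGen_leOne (fun _ _ _ => arcOSet_le_trans h2) (h𝔅.isPoset B hB) hBside hpq)⟩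

theorem isLocallyNachbin_XOBasis (h𝔅 : IsOrderedBasis 𝔅) (hN : IsLocallyNachbin 𝔅)
    (hO : IsClopen O) : IsLocallyNachbin (XOBasis 𝔅 O) := by
  intro x P hP hxP
  obtain ⟨_, ⟨a, b, h1, h2, A, hA, rfl⟩, hxU, hUP⟩ := hP x hxP
  obtain ⟨V, hV, hxV, hVside⟩ : ∃ V : Set X, IsOpen V ∧ XO.p2 x ∈ V ∧ (V ⊆ O ∨ V ⊆ Oᶜ) := by
    by_cases hx : XO.p2 x ∈ O
    exacts [⟨O, hO.isOpen, hx, .inl subset_rfl⟩, ⟨Oᶜ, hO.compl.isOpen, hx, .inr subset_rfl⟩]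
  obtain ⟨A', hA', hxA', hA'V, hA'A, hA'N⟩ :=
    hN.exists_isNachbin_subset h𝔅 hA (p2_mem_of_mem_USet hxU) hV hxV
  have hside : A'.carrier ⊆ O ∨ A'.carrier ⊆ Oᶜ := hVside.imp hA'V.trans hA'V.trans
  refine ⟨sumOSet O (arcOSet a b) A', mem_openPosets_sumOSet h𝔅 hA' hside h1 h2,
    mem_USet_of_p2_mem hxU hxA', (sumOSet_laxSub_UOSet h1 hA'A).trans hUP, ?_⟩
  rcases hside with hA'O | hA'O
  exacts [isNachbin_sumOSet_of_subset _ hA'O hA'N,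
    isNachbin_sumOSet_of_subset_compl hO (arcOSet_isNachbin h2) hA'O hA'N]

end Clopen

theorem stmt13_general {X : Type u} [TopologicalSpace X] (𝔅 : Set (OSet X))
    (h𝔅 : IsOrderedBasis 𝔅) (hN : IsLocallyNachbin 𝔅)
    (O : Set X) (hO : IsOpen O) :
    IsLocallyNachbin (XOBasis 𝔅 O) ↔ IsClosed O := by
  constructor
  · exact isClosed_of_isLocallyNachbin_XOBasis h𝔅 hO
  · exact fun hcl => isLocallyNachbin_XOBasis h𝔅 hN ⟨hcl, hO⟩

/-- For `X` a locally Nachbin ordered space and `O` an open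
neighbourhood of `⋆`, the locally ordered space `X_O` is locally Nachbin iff
`O` is closed in `X`. -/
theorem stmt13 {X : Type u} [TopologicalSpace X] (𝔅 : Set (OSet X))
    (h𝔅 : IsOrderedBasis 𝔅) (hN : IsLocallyNachbin 𝔅)
    (star : X) (O : Set X) (hO : IsOpen O) (hstar : star ∈ O) :
    IsLocallyNachbin (XOBasis 𝔅 O) ↔ IsClosed O :=
  stmt13_general 𝔅 h𝔅 hN O hO
end

section
/- Let Z be the zebra cylinder and let f : Z → Y be a locally increasing map to a locally ordered space Y such that f ∘ i₀ = f ∘ c₀. Then there exists n ∈ ℕ such that for all m ≥ n, the interval I(m) is contained in K(f) := {t ∈ [0,1] : f(s,t) = f(s',t) for all s, s' ∈ S¹}. -/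
universe u v w v'

/-! ## The zebra cylinder -/

/-- A basic ordered subset `α × O` of the zebra cylinder `S¹ × [0,1]`, for the
sequence `d`: `(s,u) ⪯ (s',u')` iff `u = u'` and (`s = s'`, or else `s ≤_α s'`
and `u` belongs to `I(n)` for some `n ∈ ℕ ∪ {∞}`). -/
def zebraOSet (d : ℕ → ℝ) (a b : ℝ) (O : Set unitInterval) :
    OSet (Circle × unitInterval) where
  carrier := (arcOSet a b).carrier ×ˢ O
  le p q :=
    p ∈ (arcOSet a b).carrier ×ˢ O ∧ q ∈ (arcOSet a b).carrier ×ˢ O ∧ p.2 = q.2 ∧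
      (p.1 = q.1 ∨ ((arcOSet a b).le p.1 q.1 ∧
        ((p.2 : ℝ) = 0 ∨ ∃ n : ℕ, (p.2 : ℝ) ∈ Set.Icc (d (2 * n + 1)) (d (2 * n)))))

/-- The strict ordered basis of the zebra cylinder. -/
def zebraBasis (d : ℕ → ℝ) : Set (OSet (Circle × unitInterval)) :=
  {B | ∃ a b : ℝ, 0 < b - a ∧ b - a < 2 * Real.pi ∧
    ∃ O : Set unitInterval, IsOpen O ∧ B = zebraOSet d a b O}

open Set Filter Topology Metric Real

/-! Choose a basic ordered set `B'` of `Y` containing the common value `f (1, 0)`. Local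
increasingness at the points `(s, 0)` makes `s ↦ f (s, t)` increasing into `B'` along short
positive arcs, for striped levels `t` near `0`; compactness of the circle makes the arc length
and the neighbourhood of `0` uniform. On a stripe `I(m)` inside that neighbourhood, chaining
short arcs around the circle gives `f (s, t) ≤ f (s', t)` in `B'` for all `s, s'`, and
antisymmetry of `B'` makes `f (·, t)` constant. -/

section ChainArgument

variable {α : Type*} {r : α → α → Prop} {δ : ℝ}

theorem rel_of_le_of_forall_sub_lt [IsTrans α r] {g : ℝ → α} {s : Set ℝ} (hs : s.OrdConnected)
    (hδ : 0 < δ)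
    (hstep : ∀ y ∈ s, ∀ z ∈ s, y ≤ z → z - y < δ → r (g y) (g z)) :
    ∀ y ∈ s, ∀ z ∈ s, y ≤ z → r (g y) (g z) := by
  have hchain : ∀ n : ℕ, ∀ y ∈ s, ∀ z ∈ s, y ≤ z → z - y ≤ n * (δ / 2) → r (g y) (g z) := by
    intro n
    induction n with
    | zero =>
      intro y hy z hz hyz h
      exact hstep y hy z hz hyz (by simp only [CharP.cast_eq_zero, zero_mul] at h; linarith)
    | succ n ih =>
      intro y hy z hz hyz h
      have hyw : y ≤ max y (z - δ / 2) := le_max_left _ _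
      have hwz : max y (z - δ / 2) ≤ z := max_le hyz (by linarith)
      have hw : max y (z - δ / 2) ∈ s := hs.out hy hz ⟨hyw, hwz⟩
      refine _root_.trans (ih y hy _ hw hyw ?_) (hstep _ hw z hz hwz ?_)
      · rw [← max_sub_sub_right]
        push_cast at h
        exact max_le (by rw [sub_self]; positivity) (by linarith)
      · linarith [le_max_right y (z - δ / 2)]
  intro y hy z hz hyz
  obtain ⟨n, hn⟩ := exists_nat_ge ((z - y) / (δ / 2))
  exact hchain n y hy z hz hyz ((div_le_iff₀ (by positivity)).1 hn)

theorem Circle.exists_exp_eq_mem_Ico (s : Circle) (a : ℝ) :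
    ∃ x ∈ Ico a (a + 2 * π), Circle.exp x = s := by
  obtain ⟨y, rfl⟩ := Circle.exp_surjective s
  exact ⟨toIcoMod two_pi_pos a y, toIcoMod_mem_Ico _ _ _, Circle.periodic_exp.sub_zsmul_eq _⟩

theorem Circle.rel_of_forall_rel_exp {g : Circle → α}
    (h : ∀ y ∈ Icc 0 (4 * π), ∀ z ∈ Icc 0 (4 * π), y ≤ z →
      r (g (Circle.exp y)) (g (Circle.exp z)))
    (s s' : Circle) : r (g s) (g s') := by
  obtain ⟨u, hu, rfl⟩ := Circle.exists_exp_eq_mem_Ico s 0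
  obtain ⟨v, hv, rfl⟩ := Circle.exists_exp_eq_mem_Ico s' u
  exact h u ⟨hu.1, by linarith [hu.2, pi_pos]⟩ v
    ⟨by linarith [hu.1, hv.1], by linarith [hu.2, hv.2]⟩ hv.1

theorem Circle.eq_of_forall_sub_lt [IsTrans α r] [Std.Antisymm r] {g : Circle → α}
    (hδ : 0 < δ)
    (hstep : ∀ y ∈ Icc 0 (4 * π), ∀ z ∈ Icc 0 (4 * π), y ≤ z → z - y < δ →
      r (g (Circle.exp y)) (g (Circle.exp z)))
    (s s' : Circle) : g s = g s' :=
  have hrel := Circle.rel_of_forall_rel_exp (rel_of_le_of_forall_sub_lt ordConnected_Icc hδ hstep)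
  antisymm (hrel s s') (hrel s' s)

end ChainArgument

theorem IsCompact.exists_pos_eventually_forall_ball {X ι : Type*} [PseudoMetricSpace X]
    {K : Set X} (hK : IsCompact K) {l : Filter ι} {P : ι → X → X → Prop}
    (hloc : ∀ x ∈ K, ∃ ε > 0, ∀ᶠ t in l, ∀ y ∈ ball x ε, ∀ z ∈ ball x ε, P t y z) :
    ∃ δ > 0, ∀ᶠ t in l, ∀ y ∈ K, ∀ z ∈ ball y δ, P t y z := by
  choose! ε hε hev using hloc
  obtain ⟨F, hFK, hF, hcover⟩ := hK.elim_finite_subcover_image (c := fun x => ball x (ε x))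
    (fun _ _ => isOpen_ball) (fun x hx => mem_biUnion hx (mem_ball_self (hε x hx)))
  obtain ⟨δ, hδ, hleb⟩ := lebesgue_number_lemma_of_metric hK
    (c := fun x : F => ball (x : X) (ε x)) (fun _ => isOpen_ball)
    (by simpa only [biUnion_eq_iUnion] using hcover)
  refine ⟨δ, hδ, (hF.eventually_all.2 fun x hx => hev x (hFK hx)).mono fun t ht y hy z hz => ?_⟩
  obtain ⟨⟨x, hx⟩, hball⟩ := hleb y hy
  exact ht x hx y (hball (mem_ball_self hδ)) z (hball hz)

theorem unitInterval.eventually_forall_le_of_tendsto_zero {ι : Type*} {l : Filter ι}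
    {d : ι → ℝ} (hd : Tendsto d l (𝓝 0)) {Q : unitInterval → Prop} (hQ : ∀ᶠ t in 𝓝 0, Q t) :
    ∀ᶠ m in l, ∀ t : unitInterval, (t : ℝ) ≤ d m → Q t := by
  obtain ⟨ρ, hρ, hQρ⟩ := Metric.eventually_nhds_iff.1 hQ
  filter_upwards [hd.eventually (gt_mem_nhds hρ)] with m hm t ht
  apply hQρ
  rw [Subtype.dist_eq, Real.dist_eq, Set.Icc.coe_zero, sub_zero, abs_of_nonneg t.2.1]
  linarith

/-- `I(∞) ∪ ⋃ₙ I(n)`: the levels at which the zebra order is nontrivial. -/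
def zebraStripes (d : ℕ → ℝ) : Set unitInterval :=
  {t | (t : ℝ) = 0 ∨ ∃ n : ℕ, (t : ℝ) ∈ Icc (d (2 * n + 1)) (d (2 * n))}

theorem exists_pos_eventually_zebra_le {Y : Type*} {𝔅' : Set (OSet Y)} {d : ℕ → ℝ}
    {f : Circle × unitInterval → Y} {x : ℝ} {t₀ : unitInterval}
    (hf : LocIncrAt (zebraBasis d) 𝔅' f (Circle.exp x, t₀)) {B' : OSet Y} (hB' : B' ∈ 𝔅')
    (hfx : f (Circle.exp x, t₀) ∈ B'.carrier) :
    ∃ ε > 0, ∀ᶠ t in 𝓝 t₀, ∀ y ∈ ball x ε, ∀ z ∈ ball x ε, t ∈ zebraStripes d → y ≤ z →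
      B'.le (f (Circle.exp y, t)) (f (Circle.exp z, t)) := by
  obtain ⟨_, ⟨a, b, -, -, O, hO, rfl⟩, ⟨⟨x', hx', hx'x⟩, ht₀⟩, -, hincr⟩ := hf B' hB' hfx
  have hshift : ∀ y, Circle.exp (y + (x' - x)) = Circle.exp y := fun y => by
    rw [Circle.exp_add, Circle.exp_sub, hx'x, div_self', mul_one]
  refine ⟨min (x' - a) (b - x'), lt_min (sub_pos.2 hx'.1) (sub_pos.2 hx'.2),
    eventually_of_mem (hO.mem_nhds ht₀) fun t ht y hy z hz hstripe hyz => ?_⟩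
  have hlift : ∀ w ∈ ball x (min (x' - a) (b - x')), w + (x' - x) ∈ Ioo a b := fun w hw => by
    rw [mem_ball, Real.dist_eq, lt_min_iff, abs_lt, abs_lt] at hw
    constructor <;> linarith
  have hmem : ∀ w ∈ ball x (min (x' - a) (b - x')),
      (Circle.exp w, t) ∈ (zebraOSet d a b O).carrier :=
    fun w hw => ⟨⟨_, hlift w hw, hshift w⟩, ht⟩
  exact hincr _ _ ⟨hmem y hy, hmem z hz, rfl,
    Or.inr ⟨⟨_, hlift y hy, _, hlift z hz, by linarith, hshift y, hshift z⟩, hstripe⟩⟩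

/-- Let `Z` be the zebra cylinder (for a strictly decreasing
sequence `d` in `[0,1]` with infimum `0`) and `f : Z → Y` a locally increasing
map with `f ∘ i₀ = f ∘ c₀`. Then there is `n` such that for all `m ≥ n`,
`I(m) ⊆ K(f)`. -/
theorem stmt16 {Y : Type v} [TopologicalSpace Y] (𝔅' : Set (OSet Y))
    (h𝔅' : IsOrderedBasis 𝔅')
    (d : ℕ → ℝ) (hd : StrictAnti d) (hd01 : ∀ n, d n ∈ Set.Icc (0 : ℝ) 1)
    (hinf : ⨅ n, d n = 0)
    (f : Circle × unitInterval → Y) (hf : LocIncr (zebraBasis d) 𝔅' f)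
    (heq : ∀ s : Circle, f (s, (0 : unitInterval)) = f ((1 : Circle), (0 : unitInterval))) :
    ∃ n : ℕ, ∀ m ≥ n, ∀ t : unitInterval,
      (t : ℝ) ∈ Set.Icc (d (2 * m + 1)) (d (2 * m)) → t ∈ Kset f := by
  obtain ⟨_, ⟨B', hB', rfl⟩, hfB', -⟩ :=
    h𝔅'.isBasis.exists_subset_of_mem_open (mem_univ (f (1, 0))) isOpen_univ
  obtain ⟨-, -, hantisymm, htrans⟩ := h𝔅'.isPoset B' hB'
  have : IsTrans Y B'.le := ⟨htrans⟩
  have : Std.Antisymm B'.le := ⟨hantisymm⟩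
  obtain ⟨δ, hδ, hsteps⟩ :=
    (isCompact_Icc (a := 0) (b := 4 * π)).exists_pos_eventually_forall_ball
      (l := 𝓝 (0 : unitInterval)) fun x _ =>
        exists_pos_eventually_zebra_le (hf _) hB' (by rw [heq]; exact hfB')
  have hdlim : Tendsto d atTop (𝓝 0) :=
    hinf ▸ tendsto_atTop_ciInf hd.antitone ⟨0, forall_mem_range.2 fun n => (hd01 n).1⟩
  obtain ⟨n, hn⟩ :=
    eventually_atTop.1 (unitInterval.eventually_forall_le_of_tendsto_zero hdlim hsteps)
  refine ⟨n, fun m hm t ht s s' => Circle.eq_of_forall_sub_lt (r := B'.le)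
    (g := fun s => f (s, t)) hδ (fun y hy z _ hyz hzy => ?_) s s'⟩
  exact hn (2 * m) (by omega) t ht.2 y hy z
    (by rwa [mem_ball, Real.dist_eq, abs_of_nonneg (sub_nonneg.2 hyz)]) (Or.inr ⟨m, ht⟩) hyz
end

section
/- Let S¹_ℚ := {e^{ix} : x ∈ ℚ} with the subspace topology from the unit circle S¹, and let O be an open neighbourhood of S¹_ℚ × {0} in S¹_ℚ × [0,1]. Then there exist a set J ⊆ ℕ and a family (A_j, t_j)_{j∈J} such that: each A_j is open in S¹_ℚ; each t_j belongs to (0,1]; A_j × [0, t_j) ⊆ O for every j ∈ J; the sets A_j are pairwise disjoint and their union is S¹_ℚ; and the greatest lower bound of {t_j : j ∈ J} is 0. -/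
universe u v w v'

/-! ## The rational circle and the space `W` -/

/-- The rational circle `S¹_ℚ = {e^{ix} : x ∈ ℚ}` as a subset of the circle. -/
def SQ : Set Circle := {z | ∃ x : ℚ, Circle.exp (x : ℝ) = z}

/-- The trace on `S¹_ℚ` of a proper open arc, with the inherited order. -/
def sqArcOSet (a b : ℝ) : OSet ↥SQ where
  carrier := {z : ↥SQ | (z : Circle) ∈ Circle.exp '' Set.Ioo a b}
  le p q := (arcOSet a b).le (p : Circle) (q : Circle)

/-- The ordered basis of the directed rational circle `S⃗¹_ℚ`. -/
def sqBasis : Set (OSet ↥SQ) :=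
  {B | ∃ a b : ℝ, 0 < b - a ∧ b - a < 2 * Real.pi ∧ B = sqArcOSet a b}

/-- The underlying set of `W := {0} ⊔ (S¹_ℚ × (0,1])`. -/
def Wsp : Type := Unit ⊕ (↥SQ × ↥(Set.Ioc (0 : ℝ) 1))

open Classical in
/-- The quotient map `q : S¹_ℚ × [0,1] → W` collapsing `S¹_ℚ × {0}` to the
point `0`. -/
noncomputable def qW : ↥SQ × unitInterval → Wsp := fun p =>
  if h : (0 : ℝ) < (p.2 : ℝ) then
    Sum.inr (p.1, ⟨(p.2 : ℝ), Set.mem_Ioc.mpr ⟨h, (Set.mem_Icc.mp p.2.2).2⟩⟩)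
  else Sum.inl ()

/-- `W` carries the final topology of `q`. -/
noncomputable instance Wsp.topology : TopologicalSpace Wsp :=
  TopologicalSpace.coinduced qW inferInstance

/-- The subset `O_h = {0} ⊔ {(s,t) : t < h s}` of `W`. -/
def OhSet (h : ↥SQ → ℝ) : Set Wsp :=
  Sum.inl '' (Set.univ : Set Unit) ∪
    Sum.inr '' {p : ↥SQ × ↥(Set.Ioc (0 : ℝ) 1) | (p.2 : ℝ) < h p.1}

/-- The poset `(O_h, ≤_h)` : `0 ≤_h 0`, and `(s,t) ≤_h (s',t')` iff `t = t'` and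
there is a proper open arc `α` with `s ≤_α s'` and `(α ∩ S¹_ℚ) × {t} ⊆ O_h`. -/
def OhOSet (h : ↥SQ → ℝ) : OSet Wsp where
  carrier := OhSet h
  le w w' :=
    (w = Sum.inl () ∧ w' = Sum.inl ()) ∨
      ∃ (s s' : ↥SQ) (t : ↥(Set.Ioc (0 : ℝ) 1)),
        w = Sum.inr (s, t) ∧ w' = Sum.inr (s', t) ∧
          ∃ a b : ℝ, 0 < b - a ∧ b - a < 2 * Real.pi ∧
            (arcOSet a b).le (s : Circle) (s' : Circle) ∧
            ∀ z : ↥SQ, (z : Circle) ∈ Circle.exp '' Set.Ioo a b →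
              (Sum.inr (z, t) : Wsp) ∈ OhSet h

/-- The trace `(α ∩ S¹_ℚ) × (a',b')` in `W`, ordered by `(s,t) ≤ (s',t')` iff
`s ≤_α s'` and `t = t'`. -/
def stripOSet (a b a' b' : ℝ) : OSet Wsp where
  carrier :=
    Sum.inr '' {p : ↥SQ × ↥(Set.Ioc (0 : ℝ) 1) |
      (p.1 : Circle) ∈ Circle.exp '' Set.Ioo a b ∧ (p.2 : ℝ) ∈ Set.Ioo a' b'}
  le w w' :=
    ∃ (s s' : ↥SQ) (t : ↥(Set.Ioc (0 : ℝ) 1)),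
      w = Sum.inr (s, t) ∧ w' = Sum.inr (s', t) ∧ (t : ℝ) ∈ Set.Ioo a' b' ∧
        (s : Circle) ∈ Circle.exp '' Set.Ioo a b ∧
        (s' : Circle) ∈ Circle.exp '' Set.Ioo a b ∧
        (arcOSet a b).le (s : Circle) (s' : Circle)

/-- The set `ℋ` of continuous, strictly positive functions `h : S¹_ℚ → [0,1]`
with infimum `0`. -/
def memH (h : ↥SQ → ℝ) : Prop :=
  Continuous h ∧ (∀ s, 0 < h s) ∧ (∀ s, h s ≤ 1) ∧ IsGLB (Set.range h) 0

/-- The ordered basis of `W`: the posets `O_h` (`h ∈ ℋ`) together with the traces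
`(α ∩ S¹_ℚ) × (a',b')` with `0 < a' < b' ≤ 1`. -/
def Wbasis : Set (OSet Wsp) :=
  {B | (∃ h : ↥SQ → ℝ, memH h ∧ B = OhOSet h) ∨
    ∃ a b a' b' : ℝ, 0 < b - a ∧ b - a < 2 * Real.pi ∧ 0 < a' ∧ a' < b' ∧ b' ≤ 1 ∧
      B = stripOSet a b a' b'}

/-- The point `1 = e^{i·0}` of the rational circle. -/
noncomputable def oneSQ : ↥SQ := ⟨1, 0, by simp⟩

open Set Metric Function

theorem isClopen_disjointed {X ι : Type*} [TopologicalSpace X] [Preorder ι]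
    [LocallyFiniteOrderBot ι] {f : ι → Set X} (hf : ∀ i, IsClopen (f i)) (i : ι) :
    IsClopen (disjointed f i) := by
  rw [disjointed_eq_inter_compl]
  exact (hf i).inter <| (finite_Iio i).isClopen_biInter fun j _ => (hf j).compl

/-- In a countable space only countably many radii are distances from `x`; any other radius
gives a ball whose sphere is empty. -/
theorem Metric.exists_isClopen_ball_of_countable {X : Type*} [PseudoMetricSpace X] [Countable X]
    (x : X) {ε : ℝ} (hε : 0 < ε) : ∃ r ∈ Ioo 0 ε, IsClopen (ball x r) := by
  obtain ⟨r, hr, hrε⟩ :=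
    ((countable_range (dist · x)).dense_compl ℝ).exists_between hε
  have hsphere : sphere x r = ∅ :=
    eq_empty_of_forall_notMem fun y hy => hr ⟨y, hy⟩
  refine ⟨r, hrε, ?_, isOpen_ball⟩
  rw [← union_empty (ball x r), ← hsphere, ball_union_sphere]
  exact isClosed_closedBall

theorem exists_isClopen_mem_subset_of_countable {X : Type*} [PseudoMetricSpace X] [Countable X]
    {U : Set X} (hU : IsOpen U) {x : X} (hx : x ∈ U) : ∃ C, IsClopen C ∧ x ∈ C ∧ C ⊆ U := by
  obtain ⟨δ, hδ, hδU⟩ := Metric.isOpen_iff.1 hU x hx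
  obtain ⟨r, hr, hC⟩ := exists_isClopen_ball_of_countable x hδ
  exact ⟨ball x r, hC, mem_ball_self hr.1, (ball_subset_ball hr.2.le).trans hδU⟩

theorem exists_isClopen_prod_Iio_subset {X : Type*} [PseudoMetricSpace X] [Countable X]
    {O : Set (X × unitInterval)} (hO : IsOpen O) {x : X} (hx : (x, 0) ∈ O) :
    ∃ C, IsClopen C ∧ x ∈ C ∧ ∃ τ ∈ Ioc (0 : ℝ) 1,
      ∀ y ∈ C, ∀ u : unitInterval, (u : ℝ) < τ → (y, u) ∈ O := by
  obtain ⟨U, V, hU, hV, hxU, h0V, hUV⟩ := isOpen_prod_iff.1 hO x 0 hx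
  obtain ⟨ε, hε, hεV⟩ := Metric.isOpen_iff.1 hV 0 h0V
  obtain ⟨C, hC, hxC, hCU⟩ := exists_isClopen_mem_subset_of_countable hU hxU
  refine ⟨C, hC, hxC, min ε 1, ⟨lt_min hε one_pos, min_le_right _ _⟩, fun y hy u hu => ?_⟩
  refine hUV ⟨hCU hy, hεV ?_⟩
  rw [mem_ball, Subtype.dist_eq, Icc.coe_zero, Real.dist_0_eq_abs, abs_of_nonneg u.2.1]
  exact hu.trans_le (min_le_left _ _)

theorem isGLB_range_zero_of_le_one_div {t : ℕ → ℝ} (hpos : ∀ k, 0 < t k)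
    (hle : ∀ k : ℕ, t k ≤ 1 / ((k : ℝ) + 1)) : IsGLB (range t) 0 := by
  refine ⟨forall_mem_range.2 fun k => (hpos k).le, fun b hb => ?_⟩
  exact ge_of_tendsto' tendsto_one_div_add_atTop_nhds_zero_nat fun k =>
    (hb (mem_range_self k)).trans (hle k)

/-- Cover `X` by a sequence of clopen sets of the form `C × [0, τ) ⊆ O`, disjointify it, and
shrink the heights `τ` to `1 / (k + 1)` at step `k` so that their infimum is `0`. -/
theorem exists_disjoint_open_cover_prod_Iio_subset {X : Type*} [PseudoMetricSpace X]
    [Countable X] [Nonempty X] {O : Set (X × unitInterval)} (hO : IsOpen O)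
    (hO0 : ∀ x, (x, 0) ∈ O) :
    ∃ (A : ℕ → Set X) (t : ℕ → ℝ), (∀ j, IsOpen (A j)) ∧ (∀ j, t j ∈ Ioc (0 : ℝ) 1) ∧
      (∀ j, ∀ x ∈ A j, ∀ u : unitInterval, (u : ℝ) < t j → (x, u) ∈ O) ∧
      Pairwise (Disjoint on A) ∧ (⋃ j, A j) = univ ∧ IsGLB (range t) 0 := by
  choose C hC hxC τ hτ hCτ using fun x => exists_isClopen_prod_Iio_subset hO (hO0 x)
  obtain ⟨e, he⟩ := exists_surjective_nat X
  have hpos : ∀ k : ℕ, 0 < min (τ (e k)) (1 / ((k : ℝ) + 1)) := fun k =>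
    lt_min (hτ _).1 Nat.one_div_pos_of_nat
  refine ⟨disjointed (C ∘ e), fun k => min (τ (e k)) (1 / ((k : ℝ) + 1)),
    fun k => (isClopen_disjointed (fun k => hC (e k)) k).isOpen,
    fun k => ⟨hpos k, (min_le_left _ _).trans (hτ _).2⟩,
    fun k x hx u hu => hCτ (e k) x (disjointed_subset _ k hx) u (hu.trans_le (min_le_left _ _)),
    disjoint_disjointed _, ?_, isGLB_range_zero_of_le_one_div hpos fun k => min_le_right _ _⟩
  rw [iUnion_disjointed]
  exact eq_univ_of_forall fun x => mem_iUnion.2 <| (he x).imp fun k (hk : e k = x) => hk ▸ hxC x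

instance : Countable SQ :=
  (countable_range fun q : ℚ => Circle.exp q).to_subtype

/-- For any open neighbourhood `O` of `S¹_ℚ × {0}` in
`S¹_ℚ × [0,1]` there is a family `(A_j, t_j)` indexed by `J ⊆ ℕ` such that:
each `A_j` is open, each `t_j ∈ (0,1]`, `A_j × [0,t_j) ⊆ O`, the `A_j` form a
partition of `S¹_ℚ`, and the greatest lower bound of `{t_j}` is `0`. -/
theorem stmt18 (O : Set (↥SQ × unitInterval)) (hO : IsOpen O)
    (hO0 : ∀ s : ↥SQ, (s, (0 : unitInterval)) ∈ O) :
    ∃ (J : Set ℕ) (A : ℕ → Set ↥SQ) (t : ℕ → ℝ),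
      (∀ j ∈ J, IsOpen (A j)) ∧
      (∀ j ∈ J, t j ∈ Set.Ioc (0 : ℝ) 1) ∧
      (∀ j ∈ J, ∀ s ∈ A j, ∀ u : unitInterval, (u : ℝ) < t j → (s, u) ∈ O) ∧
      (∀ j ∈ J, ∀ k ∈ J, j ≠ k → Disjoint (A j) (A k)) ∧
      (⋃ j ∈ J, A j) = Set.univ ∧
      IsGLB (t '' J) 0 := by
  have : Nonempty SQ := ⟨oneSQ⟩
  obtain ⟨A, t, hA, ht, hAt, hdisj, hcover, hglb⟩ :=
    exists_disjoint_open_cover_prod_Iio_subset hO hO0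
  refine ⟨univ, A, t, fun j _ => hA j, fun j _ => ht j, fun j _ => hAt j,
    fun j _ k _ hjk => hdisj hjk, by simpa using hcover, by simpa using hglb⟩
end
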